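/- Let n ≥ 1 and Q, Q̃ ∈ [0,1], and set Q_GHZ = Q + Q̃ − Q Q̃. Let |g⟩ = (|0⟩⊗|0⃗⟩ + |1⟩⊗|1⃗⟩)/√2 ∈ ℂ^2 ⊗ ℂ^{2^n} be the (n+1)-qubit GHZ state, and let D_Q denote the depolarizing channel acting on the last n qubits: D_Q(ρ) = (1−Q)ρ + (Q/2^n)(Tr_T ρ) ⊗ I_{2^n}, where Tr_T is the partial trace over the second tensor factor. Then the probability that the state D_{Q̃}(D_Q(|g⟩⟨g|)) passes Alice's GHZ projection test equals p_GHZ := ⟨g| D_{Q̃}(D_Q(|g⟩⟨g|)) |g⟩ = 1 − Q_GHZ (1 − 1/2^{n+1}). In particular p_GHZ = 1 when Q = Q̃ = 0. -/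
import Mathlib


open scoped BigOperators

/-- The `(n+1)`-qubit GHZ state `(|0⟩⊗|0⃗⟩ + |1⟩⊗|1⃗⟩)/√2` as a vector in
`ℂ^2 ⊗ ℂ^{2^n} ≅ EuclideanSpace ℂ (Bool × (Fin n → Bool))`. -/
noncomputable def ghzVec (n : ℕ) : EuclideanSpace ℂ (Bool × (Fin n → Bool)) :=
  (Real.sqrt 2 : ℂ)⁻¹ •
    (EuclideanSpace.single (false, fun _ => false) 1 +
      EuclideanSpace.single (true, fun _ => true) 1)

/-- The rank-one projector `|g⟩⟨g|`. -/
noncomputable def ghzProj (n : ℕ) :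
    Matrix (Bool × (Fin n → Bool)) (Bool × (Fin n → Bool)) ℂ :=
  Matrix.of fun p q => ghzVec n p * star (ghzVec n q)

/-- Partial trace over the second tensor factor. -/
noncomputable def ptraceT (n : ℕ)
    (M : Matrix (Bool × (Fin n → Bool)) (Bool × (Fin n → Bool)) ℂ) :
    Matrix Bool Bool ℂ :=
  Matrix.of fun a a' => ∑ t : Fin n → Bool, M (a, t) (a', t)

/-- Kronecker product of a `2×2` matrix with the identity on the second factor:
`(ρ_A ⊗ I_{2^n})_{(a,t),(a',t')} = (ρ_A)_{a,a'} δ_{t,t'}`. -/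
noncomputable def tensorIdT (n : ℕ) (ρA : Matrix Bool Bool ℂ) :
    Matrix (Bool × (Fin n → Bool)) (Bool × (Fin n → Bool)) ℂ :=
  Matrix.of fun p q => ρA p.1 q.1 * (if p.2 = q.2 then 1 else 0)

/-- The depolarizing channel acting on the last `n` qubits:
`D_Q(ρ) = (1−Q)ρ + (Q/2^n)(Tr_T ρ) ⊗ I_{2^n}`. -/
noncomputable def depolT (n : ℕ) (Q : ℝ)
    (ρ : Matrix (Bool × (Fin n → Bool)) (Bool × (Fin n → Bool)) ℂ) :
    Matrix (Bool × (Fin n → Bool)) (Bool × (Fin n → Bool)) ℂ :=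
  ((1 - Q : ℝ) : ℂ) • ρ + ((Q / 2 ^ n : ℝ) : ℂ) • tensorIdT n (ptraceT n ρ)

/-- Indicator function of the two GHZ basis states. -/
noncomputable def chiG (n : ℕ) (p : Bool × (Fin n → Bool)) : ℂ :=
  (if p = (false, fun _ => false) then 1 else 0) +
    (if p = (true, fun _ => true) then 1 else 0)

lemma ghzVec_eq (n : ℕ) (p : Bool × (Fin n → Bool)) :
    ghzVec n p = (Real.sqrt 2 : ℂ)⁻¹ * chiG n p := by
  simp [ghzVec, chiG, EuclideanSpace.single_apply, mul_add]

lemma star_sqrt2inv : star ((Real.sqrt 2 : ℂ))⁻¹ = (Real.sqrt 2 : ℂ)⁻¹ := by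
  rw [star_inv₀]
  simp [Complex.star_def, Complex.conj_ofReal]

lemma sqrt2inv_sq : ((Real.sqrt 2 : ℂ))⁻¹ * ((Real.sqrt 2 : ℂ))⁻¹ = 2⁻¹ := by
  rw [← mul_inv, ← Complex.ofReal_mul, Real.mul_self_sqrt (by norm_num)]
  norm_num

lemma star_chiG (n : ℕ) (p : Bool × (Fin n → Bool)) : star (chiG n p) = chiG n p := by
  simp [chiG, apply_ite (star : ℂ → ℂ)]

lemma star_ghzVec (n : ℕ) (p : Bool × (Fin n → Bool)) :
    star (ghzVec n p) = ghzVec n p := by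
  rw [ghzVec_eq, star_mul', star_sqrt2inv, star_chiG]

lemma chiG_sq (n : ℕ) (p : Bool × (Fin n → Bool)) : chiG n p * chiG n p = chiG n p := by
  unfold chiG
  split_ifs <;> simp_all [Prod.ext_iff]

lemma sum_chiG (n : ℕ) : ∑ p : Bool × (Fin n → Bool), chiG n p = 2 := by
  unfold chiG
  rw [Finset.sum_add_distrib]
  simp [Finset.sum_ite_eq']
  norm_num

lemma ghz_norm (n : ℕ) :
    ∑ p : Bool × (Fin n → Bool), star (ghzVec n p) * ghzVec n p = 1 := by
  have : ∀ p, star (ghzVec n p) * ghzVec n p = 2⁻¹ * chiG n p := by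
    intro p
    rw [star_ghzVec, ghzVec_eq]
    calc ((Real.sqrt 2 : ℂ))⁻¹ * chiG n p * ((Real.sqrt 2 : ℂ)⁻¹ * chiG n p)
        = ((Real.sqrt 2 : ℂ))⁻¹ * ((Real.sqrt 2 : ℂ))⁻¹ * (chiG n p * chiG n p) := by ring
      _ = 2⁻¹ * chiG n p := by rw [sqrt2inv_sq, chiG_sq]
  simp only [this, ← Finset.mul_sum, sum_chiG]
  norm_num

lemma funne (n : ℕ) (hn : 1 ≤ n) :
    (fun _ : Fin n => false) ≠ (fun _ : Fin n => true) := by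
  intro h
  have := congrFun h ⟨0, hn⟩
  simp at this

lemma chiG_false (n : ℕ) (t : Fin n → Bool) :
    chiG n (false, t) = if t = (fun _ => false) then 1 else 0 := by
  simp [chiG, Prod.ext_iff]

lemma chiG_true (n : ℕ) (t : Fin n → Bool) :
    chiG n (true, t) = if t = (fun _ => true) then 1 else 0 := by
  simp [chiG, Prod.ext_iff]

lemma ghzProj_eq (n : ℕ) :
    ghzProj n = Matrix.of fun p q => 2⁻¹ * (chiG n p * chiG n q) := by
  ext p q
  simp only [ghzProj, Matrix.of_apply]
  rw [star_ghzVec, ghzVec_eq, ghzVec_eq]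
  calc ((Real.sqrt 2 : ℂ))⁻¹ * chiG n p * ((Real.sqrt 2 : ℂ)⁻¹ * chiG n q)
      = ((Real.sqrt 2 : ℂ))⁻¹ * ((Real.sqrt 2 : ℂ))⁻¹ * (chiG n p * chiG n q) := by ring
    _ = _ := by rw [sqrt2inv_sq]

lemma ptraceT_ghzProj (n : ℕ) (hn : 1 ≤ n) :
    ptraceT n (ghzProj n) = (2⁻¹ : ℂ) • (1 : Matrix Bool Bool ℂ) := by
  have hne := funne n hn
  ext a a'
  simp only [ptraceT, Matrix.of_apply, ghzProj_eq, Matrix.smul_apply,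
    Matrix.one_apply, smul_eq_mul]
  cases a <;> cases a' <;>
    simp [chiG_false, chiG_true, ite_mul, mul_ite, Finset.sum_ite_eq', hne, hne.symm]

lemma tensorIdT_one (n : ℕ) : tensorIdT n (1 : Matrix Bool Bool ℂ) = 1 := by
  ext p q
  simp only [tensorIdT, Matrix.of_apply, Matrix.one_apply, Prod.ext_iff]
  split_ifs <;> simp_all

lemma tensorIdT_smul (n : ℕ) (c : ℂ) (ρA : Matrix Bool Bool ℂ) :
    tensorIdT n (c • ρA) = c • tensorIdT n ρA := by
  ext p q
  simp [tensorIdT, mul_assoc]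

lemma tensorIdT_add (n : ℕ) (A B : Matrix Bool Bool ℂ) :
    tensorIdT n (A + B) = tensorIdT n A + tensorIdT n B := by
  ext p q
  simp only [tensorIdT, Matrix.of_apply, Matrix.add_apply, add_mul]

lemma ptraceT_smul (n : ℕ) (c : ℂ)
    (M : Matrix (Bool × (Fin n → Bool)) (Bool × (Fin n → Bool)) ℂ) :
    ptraceT n (c • M) = c • ptraceT n M := by
  ext a a'
  simp [ptraceT, Finset.mul_sum]

lemma ptraceT_add (n : ℕ)
    (M N : Matrix (Bool × (Fin n → Bool)) (Bool × (Fin n → Bool)) ℂ) :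
    ptraceT n (M + N) = ptraceT n M + ptraceT n N := by
  ext a a'
  simp [ptraceT, Finset.sum_add_distrib]

lemma ptraceT_one (n : ℕ) :
    ptraceT n (1 : Matrix (Bool × (Fin n → Bool)) (Bool × (Fin n → Bool)) ℂ) =
      ((2 : ℂ) ^ n) • (1 : Matrix Bool Bool ℂ) := by
  ext a a'
  simp only [ptraceT, Matrix.of_apply, Matrix.one_apply, Matrix.smul_apply,
    smul_eq_mul, Prod.ext_iff]
  cases a <;> cases a' <;> simp [Finset.card_univ]

/-- The probability that the GHZ state, depolarized on the transferring qubits in the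
forward and backward channels, passes Alice's GHZ projection test:
`p_GHZ = ⟨g| D_{Q̃}(D_Q(|g⟩⟨g|)) |g⟩ = 1 − Q_GHZ (1 − 1/2^{n+1})` with
`Q_GHZ = Q + Q̃ − Q Q̃`. -/
theorem ghz_test_probability (n : ℕ) (hn : 1 ≤ n)
    (Q Qt : ℝ) (hQ0 : 0 ≤ Q) (hQ1 : Q ≤ 1) (hQt0 : 0 ≤ Qt) (hQt1 : Qt ≤ 1) :
    (∑ p : Bool × (Fin n → Bool), ∑ q : Bool × (Fin n → Bool),
        star (ghzVec n p) * depolT n Qt (depolT n Q (ghzProj n)) p q * ghzVec n q) =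
      ((1 - (Q + Qt - Q * Qt) * (1 - 1 / 2 ^ (n + 1)) : ℝ) : ℂ) := by
  -- Step 1: the doubly-depolarized GHZ projector is an explicit combination.
  set a : ℂ := (((1 - Q) * (1 - Qt) : ℝ) : ℂ) with ha
  set b : ℂ := (((Q + Qt - Q * Qt) / 2 ^ (n + 1) : ℝ) : ℂ) with hb
  have h2 : depolT n Qt (depolT n Q (ghzProj n)) =
      a • ghzProj n + b • (1 : Matrix (Bool × (Fin n → Bool)) (Bool × (Fin n → Bool)) ℂ) := by
    have h1 : depolT n Q (ghzProj n) =
        ((1 - Q : ℝ) : ℂ) • ghzProj n + ((Q / 2 ^ (n + 1) : ℝ) : ℂ) •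
          (1 : Matrix (Bool × (Fin n → Bool)) (Bool × (Fin n → Bool)) ℂ) := by
      unfold depolT
      rw [ptraceT_ghzProj n hn, tensorIdT_smul, tensorIdT_one, smul_smul]
      congr 1
      push_cast
      ring
    rw [h1]
    unfold depolT
    rw [ptraceT_add, ptraceT_smul, ptraceT_smul, ptraceT_ghzProj n hn, ptraceT_one,
      smul_smul, smul_smul, ← add_smul, tensorIdT_smul, tensorIdT_one]
    ext p q
    simp only [Matrix.add_apply, Matrix.smul_apply, smul_eq_mul, Matrix.one_apply, ha, hb]
    have h2n : (2 : ℂ) ^ n ≠ 0 := pow_ne_zero _ two_ne_zero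
    have h2n1 : (2 : ℂ) ^ (n + 1) ≠ 0 := pow_ne_zero _ two_ne_zero
    split_ifs with h <;> push_cast <;> field_simp <;> ring
  rw [h2]
  -- Step 2: evaluate the quadratic form.
  have key : (∑ p : Bool × (Fin n → Bool), ∑ q : Bool × (Fin n → Bool),
      star (ghzVec n p) *
        (a • ghzProj n + b •
          (1 : Matrix (Bool × (Fin n → Bool)) (Bool × (Fin n → Bool)) ℂ)) p q *
        ghzVec n q) = a + b := by
    have step : ∀ p q : Bool × (Fin n → Bool),
        star (ghzVec n p) *
          (a • ghzProj n + b •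
            (1 : Matrix (Bool × (Fin n → Bool)) (Bool × (Fin n → Bool)) ℂ)) p q *
          ghzVec n q =
        a * ((star (ghzVec n p) * ghzVec n p) * (star (ghzVec n q) * ghzVec n q)) +
          b * (if p = q then star (ghzVec n p) * ghzVec n q else 0) := by
      intro p q
      simp only [Matrix.add_apply, Matrix.smul_apply, smul_eq_mul, Matrix.one_apply,
        ghzProj, Matrix.of_apply, star_ghzVec]
      split_ifs with h
      · subst h; ring
      · ring
    simp only [step, Finset.sum_add_distrib]
    have e1 : (∑ p : Bool × (Fin n → Bool), ∑ q : Bool × (Fin n → Bool),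
        a * ((star (ghzVec n p) * ghzVec n p) * (star (ghzVec n q) * ghzVec n q))) = a := by
      simp only [← Finset.mul_sum, ← Finset.sum_mul, ghz_norm]
      simp
    have e2 : (∑ p : Bool × (Fin n → Bool), ∑ q : Bool × (Fin n → Bool),
        b * (if p = q then star (ghzVec n p) * ghzVec n q else 0)) = b := by
      simp only [← Finset.mul_sum]
      have hsum : (∑ p : Bool × (Fin n → Bool), ∑ q : Bool × (Fin n → Bool),
            if p = q then star (ghzVec n p) * ghzVec n q else 0) = 1 := by
        calc (∑ p : Bool × (Fin n → Bool), ∑ q : Bool × (Fin n → Bool),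
              if p = q then star (ghzVec n p) * ghzVec n q else 0)
            = ∑ p : Bool × (Fin n → Bool), star (ghzVec n p) * ghzVec n p := by
              refine Finset.sum_congr rfl fun p _ => ?_
              simp [Finset.sum_ite_eq]
          _ = 1 := ghz_norm n
      rw [hsum, mul_one]
    rw [e1, e2]
  rw [key, ha, hb]
  push_cast
  have h2n : (2 : ℂ) ^ (n + 1) ≠ 0 := pow_ne_zero _ two_ne_zero
  field_simp
  ring
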